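/- arXiv:2402.16098 — 2 statements merged into one kernel-verified Lean document; each statement's English description precedes it below -/
import Mathlib

section
/- The derived subalgebra [L,L] of the Fibonacci Lie algebra L is finitely generated; explicitly, it is generated by the five elements v_3, v_4, t_0 v_4, t_1 v_5, t_0 t_1 v_5. -/
section FibAux

variable {k : Type} [Field k] {R : Type} [CommRing R] [Algebra k R]
variable (t : ℕ → R) (v : ℕ → Derivation k R R)

/-- Bracket with a scalar multiple of a derivation. -/
lemma fib_brk_smul (f : R) (D E : Derivation k R R) :
    ⁅D, f • E⁆ = f • ⁅D, E⁆ + D f • E := by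
  ext x
  simp only [Derivation.commutator_apply, Derivation.add_apply, Derivation.smul_apply,
    Derivation.leibniz, smul_eq_mul]
  ring

/-- Products of `t`'s over two intervals sharing an index vanish. -/
lemma fib_prod_sq_zero (hsq : ∀ i, t i ^ 2 = 0) {a b c d m : ℕ}
    (h1 : a ≤ m) (h2 : m < b) (h3 : c ≤ m) (h4 : m < d) :
    (∏ x ∈ Finset.Ico a b, t x) * (∏ x ∈ Finset.Ico c d, t x) = 0 := by
  have hm1 : m ∈ Finset.Ico a b := Finset.mem_Ico.2 ⟨h1, h2⟩
  have hm2 : m ∈ Finset.Ico c d := Finset.mem_Ico.2 ⟨h3, h4⟩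
  rw [← Finset.mul_prod_erase _ _ hm1, ← Finset.mul_prod_erase _ _ hm2]
  have h0 : t m * t m = 0 := by have := hsq m; rwa [pow_two] at this
  rw [show ∀ A B : R, t m * A * (t m * B) = t m * t m * (A * B) from fun A B => by ring,
    h0, zero_mul]

variable (hsq : ∀ i, t i ^ 2 = 0)
    (hext : ∀ D D' : Derivation k R R, (∀ j, D (t j) = D' (t j)) → D = D')
    (hvlt : ∀ i j, 1 ≤ i → j < i → v i (t j) = 0)
    (hveq : ∀ i, 1 ≤ i → v i (t i) = 1)
    (hvgt : ∀ i j, 1 ≤ i → i < j → v i (t j) = ∏ m ∈ Finset.Ico (i - 1) (j - 1), t m)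

include hsq hext hvlt hveq hvgt

omit hsq hext hvlt in
lemma fib_vle {c m : ℕ} (hc : 1 ≤ c) (h : c ≤ m) :
    v c (t m) = ∏ x ∈ Finset.Ico (c - 1) (m - 1), t x := by
  rcases eq_or_lt_of_le h with rfl | h
  · rw [hveq c hc]; simp
  · exact hvgt c m hc h

omit hext in
lemma fib_lemA (c a : ℕ) (hc : 1 ≤ c) (hac : a + 2 ≤ c) (b : ℕ) :
    v c (∏ m ∈ Finset.Ico a b, t m) =
      if c < b then (∏ m ∈ Finset.Ico a c, t m) * (∏ m ∈ Finset.Ico (c + 1) b, t m)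
      else 0 := by
  induction b with
  | zero => simp
  | succ b ih =>
    rcases lt_or_ge b a with hba | hab
    · rw [Finset.Ico_eq_empty (by omega), if_neg (by omega)]
      simp
    · rw [Finset.prod_Ico_succ_top hab, Derivation.leibniz, smul_eq_mul, smul_eq_mul, ih]
      rcases lt_trichotomy b c with h | rfl | h
      · rw [hvlt c b hc h, mul_zero, if_neg (by omega), if_neg (by omega), mul_zero, add_zero]
      · rw [hveq b hc, mul_one, if_neg (by omega), mul_zero, add_zero, if_pos (by omega)]
        simp
      · rw [hvgt c b hc h, if_pos h, if_pos (by omega),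
          fib_prod_sq_zero t hsq (show a ≤ c - 1 by omega) (show c - 1 < b by omega)
            (le_refl (c - 1)) (show c - 1 < b - 1 by omega),
          Finset.prod_Ico_succ_top (show c + 1 ≤ b by omega)]
        ring

omit hext hvlt in
lemma fib_lemB (c a : ℕ) (hc : 1 ≤ c) (hca : c ≤ a) (b : ℕ) :
    v c (∏ m ∈ Finset.Ico a b, t m) =
      (if a < b then
        (∏ m ∈ Finset.Ico (c - 1) (a - 1), t m) * (∏ m ∈ Finset.Ico (a + 1) b, t m)
       else 0)
      + (if a + 1 < b then
        (∏ m ∈ Finset.Ico (c - 1) (a + 1), t m) * (∏ m ∈ Finset.Ico (a + 2) b, t m)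
       else 0) := by
  induction b with
  | zero => simp
  | succ b ih =>
    rcases lt_or_ge b a with hba | hab
    · rw [Finset.Ico_eq_empty (by omega), if_neg (by omega), if_neg (by omega)]
      simp
    · rw [Finset.prod_Ico_succ_top hab, Derivation.leibniz, smul_eq_mul, smul_eq_mul, ih]
      rcases eq_or_lt_of_le hab with rfl | hb
      · rw [if_neg (lt_irrefl a), if_neg (by omega : ¬ a + 1 < a),
          if_pos (Nat.lt_succ_self a), if_neg (by omega : ¬ a + 1 < a + 1),
          fib_vle t v hveq hvgt hc hca]
        simp
      · rcases eq_or_lt_of_le (Nat.succ_le_of_lt hb) with rfl | hb2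
        · simp only [Nat.succ_eq_add_one]
          rw [hvgt c (a + 1) hc (by omega), if_pos (by omega), if_neg (by omega),
            if_pos (by omega), if_pos (by omega),
            show a + 1 - 1 = a from rfl,
            Finset.prod_Ico_succ_top (show c - 1 ≤ a by omega),
            Finset.prod_Ico_succ_top (le_refl (a + 1)),
            Finset.prod_Ico_succ_top (le_refl a)]
          simp only [Finset.Ico_self, Finset.prod_empty, mul_one, add_zero, one_mul]
          ring
        · rw [hvgt c b hc (by omega), if_pos hb, if_pos (by omega), if_pos (by omega),
            if_pos (by omega),
            fib_prod_sq_zero t hsq (show a ≤ b - 2 by omega) (show b - 2 < b by omega)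
              (show c - 1 ≤ b - 2 by omega) (show b - 2 < b - 1 by omega),
            Finset.prod_Ico_succ_top (show a + 1 ≤ b by omega),
            Finset.prod_Ico_succ_top (show a + 2 ≤ b by omega)]
          ring

/-- The key bracket formula `⁅vᵢ, vⱼ⁆ = vᵢ(t_{j-1}) • v_{j+1}` for `1 ≤ i < j`. -/
lemma fib_brk (i j : ℕ) (hi : 1 ≤ i) (hij : i < j) :
    ⁅v i, v j⁆ = (∏ m ∈ Finset.Ico (i - 1) (j - 2), t m) • v (j + 1) := by
  obtain ⟨a, rfl⟩ : ∃ a, i = a + 1 := ⟨i - 1, by omega⟩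
  obtain ⟨e, rfl⟩ : ∃ e, j = a + e + 2 := ⟨j - a - 2, by omega⟩
  have key : ∀ l, ⁅v (a + 1), v (a + e + 2)⁆ (t l)
      = ((∏ m ∈ Finset.Ico a (a + e), t m) • v (a + e + 3)) (t l) := by
    intro l
    rw [Derivation.commutator_apply, Derivation.smul_apply, smul_eq_mul]
    rcases lt_trichotomy l (a + e + 2) with hlj | rfl | hlj
    · rw [hvlt (a + e + 2) l (by omega) hlj, map_zero,
        hvlt (a + e + 3) l (by omega) (by omega), mul_zero, zero_sub, neg_eq_zero]
      rcases lt_trichotomy l (a + 1) with h | rfl | h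
      · rw [hvlt (a + 1) l (by omega) h, map_zero]
      · rw [hveq (a + 1) (by omega), Derivation.map_one_eq_zero]
      · rw [hvgt (a + 1) l (by omega) h,
          fib_lemA t v hsq hvlt hveq hvgt (a + e + 2) ((a + 1) - 1) (by omega) (by omega),
          if_neg (by omega)]
    · rw [hveq (a + e + 2) (by omega), Derivation.map_one_eq_zero,
        hvlt (a + e + 3) (a + e + 2) (by omega) (by omega), mul_zero,
        hvgt (a + 1) (a + e + 2) (by omega) (by omega),
        fib_lemA t v hsq hvlt hveq hvgt (a + e + 2) ((a + 1) - 1) (by omega) (by omega),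
        if_neg (by omega), zero_sub, neg_zero]
    · rcases eq_or_lt_of_le (Nat.succ_le_of_lt hlj) with rfl | hl2
      · rw [hvgt (a + e + 2) (a + e + 2 + 1) (by omega) (by omega),
          hveq (a + e + 3) (by omega), mul_one,
          show a + e + 2 - 1 = a + e + 1 from rfl,
          show a + e + 2 + 1 - 1 = a + e + 2 from rfl,
          Finset.prod_Ico_succ_top (le_refl (a + e + 1)), Finset.Ico_self,
          Finset.prod_empty, one_mul,
          fib_vle t v hveq hvgt (show 1 ≤ a + 1 by omega) (show a + 1 ≤ a + e + 1 by omega),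
          hvgt (a + 1) (a + e + 2 + 1) (by omega) (by omega),
          fib_lemA t v hsq hvlt hveq hvgt (a + e + 2) ((a + 1) - 1) (by omega) (by omega),
          if_neg (by omega), sub_zero]
        norm_num
      · obtain ⟨d, rfl⟩ : ∃ d, l = a + e + 4 + d := ⟨l - a - e - 4, by omega⟩
        rw [hvgt (a + e + 2) (a + e + 4 + d) (by omega) (by omega),
          hvgt (a + 1) (a + e + 4 + d) (by omega) (by omega),
          hvgt (a + e + 3) (a + e + 4 + d) (by omega) (by omega),
          show a + e + 2 - 1 = a + e + 1 from rfl,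
          show a + e + 3 - 1 = a + e + 2 from rfl,
          show a + e + 4 + d - 1 = a + e + 3 + d by omega,
          show a + 1 - 1 = a from rfl,
          fib_lemB t v hsq hveq hvgt (a + 1) (a + e + 1) (by omega) (by omega),
          fib_lemA t v hsq hvlt hveq hvgt (a + e + 2) a (by omega) (by omega),
          if_pos (by omega), if_pos (by omega), if_pos (by omega),
          show a + 1 - 1 = a from rfl,
          show a + e + 1 - 1 = a + e from rfl]
        ring
  exact hext _ _ key

end FibAux

/-- The derived subalgebra `[L, L]` of the Fibonacci Lie algebra
`L = ⟨v₁, v₂⟩` is finitely generated: it is generated, as a Lie algebra, by the five elements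
`v₃, v₄, t₀v₄, t₁v₅, t₀t₁v₅`. -/
theorem fibonacci_derived_subalgebra_finitely_generated
    {k : Type} [Field k] [CharP k 2]
    {R : Type} [CommRing R] [Algebra k R]
    -- `R = k[t₀, t₁, …]/(tᵢ²)` is the ring of truncated polynomials:
    (t : ℕ → R)
    (hsq : ∀ i, t i ^ 2 = 0)
    (hadj : Algebra.adjoin k (Set.range t) = ⊤)
    (hext : ∀ D D' : Derivation k R R, (∀ j, D (t j) = D' (t j)) → D = D')
    -- `pd i` is the partial derivative `∂ᵢ = ∂/∂tᵢ`:
    (pd : ℕ → Derivation k R R)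
    (hpd : ∀ i j, pd i (t j) = if i = j then 1 else 0)
    -- `v i` are the pivot elements, defined recursively by `vᵢ = ∂ᵢ + t_{i-1} v_{i+1}`,
    -- i.e. the derivations `vᵢ = ∂ᵢ + t_{i-1}(∂_{i+1} + tᵢ(∂_{i+2} + ⋯))`:
    (v : ℕ → Derivation k R R)
    (hrec : ∀ i, 1 ≤ i → v i = pd i + t (i - 1) • v (i + 1))
    (hvlt : ∀ i j, 1 ≤ i → j < i → v i (t j) = 0)
    (hveq : ∀ i, 1 ≤ i → v i (t i) = 1)
    (hvgt : ∀ i j, 1 ≤ i → i < j → v i (t j) = ∏ m ∈ Finset.Ico (i - 1) (j - 1), t m)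
    (h3 : v 3 ∈ LieSubalgebra.lieSpan k (Derivation k R R) {v 1, v 2})
    (h4 : v 4 ∈ LieSubalgebra.lieSpan k (Derivation k R R) {v 1, v 2})
    (h04 : t 0 • v 4 ∈ LieSubalgebra.lieSpan k (Derivation k R R) {v 1, v 2})
    (h15 : t 1 • v 5 ∈ LieSubalgebra.lieSpan k (Derivation k R R) {v 1, v 2})
    (h015 : (t 0 * t 1) • v 5 ∈ LieSubalgebra.lieSpan k (Derivation k R R) {v 1, v 2})
    : (LieSubalgebra.lieSpan k
          ↥(LieSubalgebra.lieSpan k (Derivation k R R) {v 1, v 2})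
          {⟨v 3, h3⟩, ⟨v 4, h4⟩, ⟨t 0 • v 4, h04⟩, ⟨t 1 • v 5, h15⟩,
            ⟨(t 0 * t 1) • v 5, h015⟩}).toSubmodule =
        (⁅(⊤ : LieIdeal k ↥(LieSubalgebra.lieSpan k (Derivation k R R) {v 1, v 2})),
            (⊤ : LieIdeal k ↥(LieSubalgebra.lieSpan k (Derivation k R R) {v 1, v 2}))⁆ :
          LieIdeal k ↥(LieSubalgebra.lieSpan k (Derivation k R R) {v 1, v 2})).toSubmodule := by
  classical
  set L' := LieSubalgebra.lieSpan k (Derivation k R R) {v 1, v 2} with hL'def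
  -- the five generators, inside the big Lie algebra of derivations
  set T := LieSubalgebra.lieSpan k (Derivation k R R)
      {v 3, v 4, t 0 • v 4, t 1 • v 5, (t 0 * t 1) • v 5} with hTdef
  have E := fib_brk t v hsq hext hvlt hveq hvgt
  -- interval products
  have p01 : (∏ m ∈ Finset.Ico 0 1, t m) = t 0 := by simp
  have p02 : (∏ m ∈ Finset.Ico 0 2, t m) = t 0 * t 1 := by
    rw [Finset.prod_Ico_succ_top (by norm_num), p01]
  have p03 : (∏ m ∈ Finset.Ico 0 3, t m) = t 0 * t 1 * t 2 := by
    rw [Finset.prod_Ico_succ_top (by norm_num), p02]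
  have p12 : (∏ m ∈ Finset.Ico 1 2, t m) = t 1 := by simp
  have p13 : (∏ m ∈ Finset.Ico 1 3, t m) = t 1 * t 2 := by
    rw [Finset.prod_Ico_succ_top (by norm_num), p12]
  -- bracket identities
  have e12 : ⁅v 1, v 2⁆ = v 3 := by
    have h := E 1 2 (by norm_num) (by norm_num); simpa using h
  have e13 : ⁅v 1, v 3⁆ = t 0 • v 4 := by
    have h := E 1 3 (by norm_num) (by norm_num)
    rw [show (1:ℕ) - 1 = 0 from rfl, show (3:ℕ) - 2 = 1 from rfl, p01] at h
    exact h
  have e23 : ⁅v 2, v 3⁆ = v 4 := by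
    have h := E 2 3 (by norm_num) (by norm_num); simpa using h
  have e14 : ⁅v 1, v 4⁆ = (t 0 * t 1) • v 5 := by
    have h := E 1 4 (by norm_num) (by norm_num)
    rw [show (1:ℕ) - 1 = 0 from rfl, show (4:ℕ) - 2 = 2 from rfl, p02] at h
    exact h
  have e24 : ⁅v 2, v 4⁆ = t 1 • v 5 := by
    have h := E 2 4 (by norm_num) (by norm_num)
    rw [show (2:ℕ) - 1 = 1 from rfl, show (4:ℕ) - 2 = 2 from rfl, p12] at h
    exact h
  have e34 : ⁅v 3, v 4⁆ = v 5 := by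
    have h := E 3 4 (by norm_num) (by norm_num); simpa using h
  have e15 : ⁅v 1, v 5⁆ = (t 0 * t 1 * t 2) • v 6 := by
    have h := E 1 5 (by norm_num) (by norm_num)
    rw [show (1:ℕ) - 1 = 0 from rfl, show (5:ℕ) - 2 = 3 from rfl, p03] at h
    exact h
  have e25 : ⁅v 2, v 5⁆ = (t 1 * t 2) • v 6 := by
    have h := E 2 5 (by norm_num) (by norm_num)
    rw [show (2:ℕ) - 1 = 1 from rfl, show (5:ℕ) - 2 = 3 from rfl, p13] at h
    exact h
  -- memberships of the generators in T
  have hg1 : v 3 ∈ T := LieSubalgebra.subset_lieSpan (by simp)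
  have hg2 : v 4 ∈ T := LieSubalgebra.subset_lieSpan (by simp)
  have hg3 : t 0 • v 4 ∈ T := LieSubalgebra.subset_lieSpan (by simp)
  have hg4 : t 1 • v 5 ∈ T := LieSubalgebra.subset_lieSpan (by simp)
  have hg5 : (t 0 * t 1) • v 5 ∈ T := LieSubalgebra.subset_lieSpan (by simp)
  have hv5 : v 5 ∈ T := by rw [← e34]; exact T.lie_mem hg1 hg2
  have ht05 : t 0 • v 5 ∈ T := by
    have h := T.lie_mem hg1 hg3
    rwa [fib_brk_smul, e34, hvlt 3 0 (by norm_num) (by norm_num), zero_smul, add_zero] at h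
  -- squares vanish
  have sq0 : t 0 * t 0 = 0 := by have := hsq 0; rwa [pow_two] at this
  have sq1 : t 1 * t 1 = 0 := by have := hsq 1; rwa [pow_two] at this
  -- the ten bracket computations
  have b1g1 : ⁅v 1, v 3⁆ ∈ T := e13 ▸ hg3
  have b2g1 : ⁅v 2, v 3⁆ ∈ T := e23 ▸ hg2
  have b1g2 : ⁅v 1, v 4⁆ ∈ T := e14 ▸ hg5
  have b2g2 : ⁅v 2, v 4⁆ ∈ T := e24 ▸ hg4
  have b1g3 : ⁅v 1, t 0 • v 4⁆ ∈ T := by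
    rw [fib_brk_smul, e14, hvlt 1 0 (by norm_num) (by norm_num), zero_smul, add_zero,
      smul_smul, show t 0 * (t 0 * t 1) = t 0 * t 0 * t 1 by ring, sq0, zero_mul, zero_smul]
    exact T.zero_mem
  have b2g3 : ⁅v 2, t 0 • v 4⁆ ∈ T := by
    rw [fib_brk_smul, e24, hvlt 2 0 (by norm_num) (by norm_num), zero_smul, add_zero,
      smul_smul]
    exact hg5
  have b1g4 : ⁅v 1, t 1 • v 5⁆ ∈ T := by
    rw [fib_brk_smul, e15, hveq 1 (by norm_num), smul_smul,
      show t 1 * (t 0 * t 1 * t 2) = t 1 * t 1 * (t 0 * t 2) by ring, sq1, zero_mul,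
      zero_smul, zero_add, one_smul]
    exact hv5
  have b2g4 : ⁅v 2, t 1 • v 5⁆ ∈ T := by
    rw [fib_brk_smul, e25, hvlt 2 1 (by norm_num) (by norm_num), zero_smul, add_zero,
      smul_smul, show t 1 * (t 1 * t 2) = t 1 * t 1 * t 2 by ring, sq1, zero_mul, zero_smul]
    exact T.zero_mem
  have b1g5 : ⁅v 1, (t 0 * t 1) • v 5⁆ ∈ T := by
    rw [fib_brk_smul, e15, smul_smul,
      show t 0 * t 1 * (t 0 * t 1 * t 2) = t 0 * t 0 * (t 1 * t 1 * t 2) by ring, sq0,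
      zero_mul, zero_smul, zero_add, Derivation.leibniz,
      hvlt 1 0 (by norm_num) (by norm_num), hveq 1 (by norm_num), smul_zero, add_zero,
      smul_eq_mul, mul_one]
    exact ht05
  have b2g5 : ⁅v 2, (t 0 * t 1) • v 5⁆ ∈ T := by
    rw [fib_brk_smul, e25, smul_smul,
      show t 0 * t 1 * (t 1 * t 2) = t 1 * t 1 * (t 0 * t 2) by ring, sq1, zero_mul,
      zero_smul, zero_add, Derivation.leibniz,
      hvlt 2 0 (by norm_num) (by norm_num), hvlt 2 1 (by norm_num) (by norm_num),
      smul_zero, smul_zero, add_zero, zero_smul]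
    exact T.zero_mem
  have Tneg : ∀ {x : Derivation k R R}, x ∈ T → -x ∈ T := fun {x} h => by
    rw [← zero_sub]; exact T.sub_mem T.zero_mem h
  -- T is closed under bracketing with v 1 and v 2
  let M : LieSubalgebra k (Derivation k R R) :=
    { carrier := {d | d ∈ T ∧ ⁅v 1, d⁆ ∈ T ∧ ⁅v 2, d⁆ ∈ T}
      add_mem' := fun hx hy =>
        ⟨T.add_mem hx.1 hy.1,
         by rw [lie_add]; exact T.add_mem hx.2.1 hy.2.1,
         by rw [lie_add]; exact T.add_mem hx.2.2 hy.2.2⟩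
      zero_mem' :=
        ⟨T.zero_mem, by rw [lie_zero]; exact T.zero_mem, by rw [lie_zero]; exact T.zero_mem⟩
      smul_mem' := fun c x hx =>
        ⟨T.smul_mem c hx.1,
         by rw [lie_smul]; exact T.smul_mem c hx.2.1,
         by rw [lie_smul]; exact T.smul_mem c hx.2.2⟩
      lie_mem' := fun {x y} hx hy =>
        ⟨T.lie_mem hx.1 hy.1,
         by rw [leibniz_lie]; exact T.add_mem (T.lie_mem hx.2.1 hy.1) (T.lie_mem hx.1 hy.2.1),
         by rw [leibniz_lie]; exact T.add_mem (T.lie_mem hx.2.2 hy.1) (T.lie_mem hx.1 hy.2.2)⟩ }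
  have hTM : T ≤ M := by
    rw [hTdef, LieSubalgebra.lieSpan_le]
    rintro x hx
    simp only [Set.mem_insert_iff, Set.mem_singleton_iff] at hx
    rcases hx with rfl | rfl | rfl | rfl | rfl
    · exact ⟨hg1, b1g1, b2g1⟩
    · exact ⟨hg2, b1g2, b2g2⟩
    · exact ⟨hg3, b1g3, b2g3⟩
    · exact ⟨hg4, b1g4, b2g4⟩
    · exact ⟨hg5, b1g5, b2g5⟩
  have claim1 : ∀ x ∈ T, ⁅v 1, x⁆ ∈ T ∧ ⁅v 2, x⁆ ∈ T := fun x hx =>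
    ⟨(hTM hx).2.1, (hTM hx).2.2⟩
  -- T is stable under bracketing with all of L'
  let N : LieSubalgebra k (Derivation k R R) :=
    { carrier := {x | ∀ d ∈ T, ⁅x, d⁆ ∈ T}
      add_mem' := fun hx hy d hd => by rw [add_lie]; exact T.add_mem (hx d hd) (hy d hd)
      zero_mem' := fun d hd => by rw [zero_lie]; exact T.zero_mem
      smul_mem' := fun c x hx d hd => by rw [smul_lie]; exact T.smul_mem c (hx d hd)
      lie_mem' := fun {x y} hx hy d hd => by
        rw [lie_lie]; exact T.sub_mem (hx _ (hy d hd)) (hy _ (hx d hd)) }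
  have hLN : L' ≤ N := by
    rw [hL'def, LieSubalgebra.lieSpan_le]
    rintro x hx
    simp only [Set.mem_insert_iff, Set.mem_singleton_iff] at hx
    rcases hx with rfl | rfl
    · exact fun d hd => (claim1 d hd).1
    · exact fun d hd => (claim1 d hd).2
  -- every y in L' has brackets with v 1, v 2 in T
  let CC : LieSubalgebra k (Derivation k R R) :=
    { carrier := {y | y ∈ L' ∧ ⁅v 1, y⁆ ∈ T ∧ ⁅v 2, y⁆ ∈ T}
      add_mem' := fun hx hy =>
        ⟨L'.add_mem hx.1 hy.1,
         by rw [lie_add]; exact T.add_mem hx.2.1 hy.2.1,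
         by rw [lie_add]; exact T.add_mem hx.2.2 hy.2.2⟩
      zero_mem' :=
        ⟨L'.zero_mem, by rw [lie_zero]; exact T.zero_mem, by rw [lie_zero]; exact T.zero_mem⟩
      smul_mem' := fun c x hx =>
        ⟨L'.smul_mem c hx.1,
         by rw [lie_smul]; exact T.smul_mem c hx.2.1,
         by rw [lie_smul]; exact T.smul_mem c hx.2.2⟩
      lie_mem' := fun {x y} hx hy =>
        ⟨L'.lie_mem hx.1 hy.1,
         by
          rw [leibniz_lie]
          refine T.add_mem ?_ (hLN hx.1 _ hy.2.1)
          rw [← lie_skew]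
          exact Tneg (hLN hy.1 _ hx.2.1),
         by
          rw [leibniz_lie]
          refine T.add_mem ?_ (hLN hx.1 _ hy.2.2)
          rw [← lie_skew]
          exact Tneg (hLN hy.1 _ hx.2.2)⟩ }
  have hv1L : v 1 ∈ L' := LieSubalgebra.subset_lieSpan (by simp)
  have hv2L : v 2 ∈ L' := LieSubalgebra.subset_lieSpan (by simp)
  have hLCC : L' ≤ CC := by
    rw [hL'def, LieSubalgebra.lieSpan_le]
    rintro x hx
    simp only [Set.mem_insert_iff, Set.mem_singleton_iff] at hx
    rcases hx with rfl | rfl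
    · refine ⟨hv1L, by rw [lie_self]; exact T.zero_mem, ?_⟩
      rw [← lie_skew]
      exact Tneg (e12 ▸ hg1)
    · exact ⟨hv2L, e12 ▸ hg1, by rw [lie_self]; exact T.zero_mem⟩
  -- the derived-algebra inclusion: all brackets of elements of L' lie in T
  have stepB : ∀ x ∈ L', ∀ y ∈ L', ⁅x, y⁆ ∈ T := by
    intro x hx y hy
    let D : LieSubalgebra k (Derivation k R R) :=
      { carrier := {z | z ∈ L' ∧ ⁅z, y⁆ ∈ T}
        add_mem' := fun hp hq =>
          ⟨L'.add_mem hp.1 hq.1, by rw [add_lie]; exact T.add_mem hp.2 hq.2⟩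
        zero_mem' := ⟨L'.zero_mem, by rw [zero_lie]; exact T.zero_mem⟩
        smul_mem' := fun c p hp =>
          ⟨L'.smul_mem c hp.1, by rw [smul_lie]; exact T.smul_mem c hp.2⟩
        lie_mem' := fun {p q} hp hq =>
          ⟨L'.lie_mem hp.1 hq.1,
           by rw [lie_lie]; exact T.sub_mem (hLN hp.1 _ hq.2) (hLN hq.1 _ hp.2)⟩ }
    have hLD : L' ≤ D := by
      rw [hL'def, LieSubalgebra.lieSpan_le]
      rintro z hz
      simp only [Set.mem_insert_iff, Set.mem_singleton_iff] at hz
      rcases hz with rfl | rfl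
      · exact ⟨hv1L, (hLCC hy).2.1⟩
      · exact ⟨hv2L, (hLCC hy).2.2⟩
    exact (hLD hx).2
  -- passing between T and the span S inside L'
  set S := LieSubalgebra.lieSpan k (↥L')
      {(⟨v 3, h3⟩ : L'), ⟨v 4, h4⟩, ⟨t 0 • v 4, h04⟩, ⟨t 1 • v 5, h15⟩,
        ⟨(t 0 * t 1) • v 5, h015⟩} with hSdef
  have hTmapS : T ≤ LieSubalgebra.map L'.incl S := by
    rw [hTdef, LieSubalgebra.lieSpan_le]
    rintro x hx
    simp only [Set.mem_insert_iff, Set.mem_singleton_iff] at hx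
    rcases hx with rfl | rfl | rfl | rfl | rfl
    · exact ⟨⟨v 3, h3⟩, LieSubalgebra.subset_lieSpan (by simp), rfl⟩
    · exact ⟨⟨v 4, h4⟩, LieSubalgebra.subset_lieSpan (by simp), rfl⟩
    · exact ⟨⟨t 0 • v 4, h04⟩, LieSubalgebra.subset_lieSpan (by simp), rfl⟩
    · exact ⟨⟨t 1 • v 5, h15⟩, LieSubalgebra.subset_lieSpan (by simp), rfl⟩
    · exact ⟨⟨(t 0 * t 1) • v 5, h015⟩, LieSubalgebra.subset_lieSpan (by simp), rfl⟩
  have hTS : ∀ d : L', (d : Derivation k R R) ∈ T → d ∈ S := by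
    intro d hd
    obtain ⟨s, hs, hseq⟩ := (LieSubalgebra.mem_map _ _ _).1 (hTmapS hd)
    have : s = d := Subtype.ext hseq
    exact this ▸ hs
  -- elements of L' as a type
  have brS : ∀ x y : L', ⁅x, y⁆ ∈ S := by
    intro x y
    apply hTS
    rw [LieSubalgebra.coe_bracket]
    exact stepB _ x.2 _ y.2
  apply le_antisymm
  · -- S ≤ [L', L']
    intro x hx
    have hx' : x ∈ S := hx
    have hle : S ≤ ((⁅(⊤ : LieIdeal k ↥L'), (⊤ : LieIdeal k ↥L')⁆ : LieIdeal k ↥L') :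
        LieSubalgebra k ↥L') := by
      rw [hSdef, LieSubalgebra.lieSpan_le]
      rintro y hy
      simp only [Set.mem_insert_iff, Set.mem_singleton_iff] at hy
      have mem_der : ∀ a b : L', (⁅a, b⁆ : L') ∈
          (⁅(⊤ : LieIdeal k ↥L'), (⊤ : LieIdeal k ↥L')⁆ : LieIdeal k ↥L') := fun a b =>
        LieSubmodule.lie_mem_lie trivial trivial
      rcases hy with rfl | rfl | rfl | rfl | rfl
      · have : (⟨v 3, h3⟩ : L') = ⁅(⟨v 1, hv1L⟩ : L'), ⟨v 2, hv2L⟩⁆ :=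
          Subtype.ext (by rw [LieSubalgebra.coe_bracket]; exact e12.symm)
        rw [this]; exact mem_der _ _
      · have : (⟨v 4, h4⟩ : L') = ⁅(⟨v 2, hv2L⟩ : L'), ⟨v 3, h3⟩⁆ :=
          Subtype.ext (by rw [LieSubalgebra.coe_bracket]; exact e23.symm)
        rw [this]; exact mem_der _ _
      · have : (⟨t 0 • v 4, h04⟩ : L') = ⁅(⟨v 1, hv1L⟩ : L'), ⟨v 3, h3⟩⁆ :=
          Subtype.ext (by rw [LieSubalgebra.coe_bracket]; exact e13.symm)
        rw [this]; exact mem_der _ _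
      · have : (⟨t 1 • v 5, h15⟩ : L') = ⁅(⟨v 2, hv2L⟩ : L'), ⟨v 4, h4⟩⁆ :=
          Subtype.ext (by rw [LieSubalgebra.coe_bracket]; exact e24.symm)
        rw [this]; exact mem_der _ _
      · have : (⟨(t 0 * t 1) • v 5, h015⟩ : L') = ⁅(⟨v 1, hv1L⟩ : L'), ⟨v 4, h4⟩⁆ :=
          Subtype.ext (by rw [LieSubalgebra.coe_bracket]; exact e14.symm)
        rw [this]; exact mem_der _ _
    exact hle hx'
  · -- [L', L'] ≤ S
    intro x hx
    have hx' : x ∈ (⁅(⊤ : LieIdeal k ↥L'), (⊤ : LieIdeal k ↥L')⁆ : LieIdeal k ↥L') := hx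
    -- use the span description of the ideal bracket
    have hspan : (⁅(⊤ : LieIdeal k ↥L'), (⊤ : LieIdeal k ↥L')⁆ : LieIdeal k ↥L') ≤
        { toSubmodule := S.toSubmodule
          lie_mem := fun {p m} hm => by
            have : (⁅p, m⁆ : L') ∈ S := brS p m
            exact this } := by
      rw [LieSubmodule.lieIdeal_oper_eq_span, LieSubmodule.lieSpan_le]
      rintro z ⟨a, b, rfl⟩
      exact brS _ _
    exact hspan hx'
end

section
/- Let Q be a one-dimensional Lie algebra over a field k and let 0 → W_0 → W →^p k → 0 be a short exact sequence of U(Q)-modules where k is the trivial module. If there exists w ∈ W with w·Q = 0 and p(w) ≠ 0, then the induced sequence of coinvariants 0 → (W_0)_Q → W_Q → k → 0 is exact (in particular (W_0)_Q → W_Q is injective). -/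
section Coinvariants

variable (k : Type*) [Field k] (Q : Type*) [LieRing Q] [LieAlgebra k Q]
variable (W : Type*) [AddCommGroup W] [Module k W] [LieRingModule Q W] [LieModule k Q W]

/-- The submodule `W·Q` of a `Q`-module `W`, spanned by the elements `q·w`. -/
def actSub : Submodule k W := Submodule.span k {x | ∃ (q : Q) (w : W), x = ⁅q, w⁆}

/-- The coinvariants `W_Q = W/(W·Q)` of a `Q`-module `W`. -/
def coinv : Type _ := W ⧸ actSub k Q W

noncomputable instance : AddCommGroup (coinv k Q W) :=
  inferInstanceAs (AddCommGroup (W ⧸ actSub k Q W))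

noncomputable instance : Module k (coinv k Q W) :=
  inferInstanceAs (Module k (W ⧸ actSub k Q W))

variable {k Q W}
variable {W₀ : Type*} [AddCommGroup W₀] [Module k W₀] [LieRingModule Q W₀] [LieModule k Q W₀]

/-- The map on coinvariants induced by a morphism of `Q`-modules. -/
noncomputable def coinvMap (ι : W₀ →ₗ⁅k,Q⁆ W) : coinv k Q W₀ →ₗ[k] coinv k Q W :=
  Submodule.mapQ _ _ ι.toLinearMap (by
    rw [actSub, Submodule.span_le]
    rintro x ⟨q, w, rfl⟩
    simp only [SetLike.mem_coe, Submodule.mem_comap, LieModuleHom.coe_toLinearMap,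
      LieModuleHom.map_lie]
    exact Submodule.subset_span ⟨q, ι w, rfl⟩)

/-- The map on coinvariants induced by a linear map `p : W → k` to the trivial module that
kills the action of `Q` (i.e. `p(q·w) = 0`). -/
noncomputable def coinvLift (p : W →ₗ[k] k) (hp : ∀ (q : Q) (w : W), p ⁅q, w⁆ = 0) :
    coinv k Q W →ₗ[k] k :=
  Submodule.liftQ _ p (by
    rw [actSub, Submodule.span_le]
    rintro x ⟨q, w, rfl⟩
    exact LinearMap.mem_ker.2 (hp q w))

end Coinvariants

/-- Let `Q` be a one-dimensional Lie algebra over a field `k` and let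
`0 → W₀ → W →ᵖ k → 0` be a short exact sequence of `U(Q)`-modules where `k` is the trivial
module.  If there exists `w ∈ W` with `Q·w = 0` and `p(w) ≠ 0`, then the induced sequence of
coinvariants `0 → (W₀)_Q → W_Q → k → 0` is exact; in particular `(W₀)_Q → W_Q` is
injective. -/
theorem coinvariants_left_exact
    {k : Type} [Field k] {Q : Type} [LieRing Q] [LieAlgebra k Q]
    (hQ : Module.finrank k Q = 1)
    {W₀ W : Type} [AddCommGroup W₀] [Module k W₀] [LieRingModule Q W₀] [LieModule k Q W₀]
    [AddCommGroup W] [Module k W] [LieRingModule Q W] [LieModule k Q W]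
    (ι : W₀ →ₗ⁅k,Q⁆ W) (p : W →ₗ[k] k)
    (hp : ∀ (q : Q) (w : W), p ⁅q, w⁆ = 0)
    (hιinj : Function.Injective ι)
    (hexact : LinearMap.range ι.toLinearMap = LinearMap.ker p)
    (hpsurj : Function.Surjective p)
    (w : W) (hw : ∀ q : Q, ⁅q, w⁆ = 0) (hpw : p w ≠ 0)
    : Function.Injective (coinvMap ι) ∧
        LinearMap.range (coinvMap ι) = LinearMap.ker (coinvLift p hp) ∧
        Function.Surjective (coinvLift p hp) := by
  obtain ⟨q₀, -, hq₀⟩ := (finrank_eq_one_iff' (K := k) (V := Q)).1 hQ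
  -- characterization of actSub membership
  have hmem : ∀ x : W, x ∈ actSub k Q W ↔ ∃ v : W, x = ⁅q₀, v⁆ := by
    intro x
    constructor
    · intro hx
      have hle : actSub k Q W ≤ LinearMap.range
          ({ toFun := fun v => ⁅q₀, v⁆, map_add' := lie_add q₀,
             map_smul' := fun c v => (lie_smul c q₀ v) } : W →ₗ[k] W) := by
        rw [actSub, Submodule.span_le]
        rintro y ⟨q, v, rfl⟩
        obtain ⟨c, rfl⟩ := hq₀ q
        exact ⟨c • v, by simp [smul_lie, lie_smul]⟩
      obtain ⟨v, hv⟩ := hle hx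
      exact ⟨v, hv.symm⟩
    · rintro ⟨v, rfl⟩
      exact Submodule.subset_span ⟨q₀, v, rfl⟩
  -- key: if ι u lies in actSub W then u lies in actSub W₀
  have key : ∀ u : W₀, (ι u : W) ∈ actSub k Q W → u ∈ actSub k Q W₀ := by
    intro u hu
    obtain ⟨v, hv⟩ := (hmem _).1 hu
    set c : k := p v / p w with hc
    have hv' : p (v - c • w) = 0 := by
      simp [hc, div_mul_cancel₀ _ hpw, map_sub]
    obtain ⟨u', hu'⟩ : v - c • w ∈ LinearMap.range ι.toLinearMap := by
      rw [hexact]; exact hv'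
    have hb : ⁅q₀, v⁆ = ι ⁅q₀, u'⁆ := by
      have : v = (v - c • w) + c • w := by abel
      rw [this, lie_add, lie_smul, hw q₀, smul_zero, add_zero, ← hu']
      simp
    have : (ι u : W) = ι ⁅q₀, u'⁆ := by rw [hv, hb]
    have := hιinj this
    rw [this]
    exact Submodule.subset_span ⟨q₀, u', rfl⟩
  refine ⟨?_, ?_, ?_⟩
  · rw [← LinearMap.ker_eq_bot]
    rw [Submodule.eq_bot_iff]
    intro a ha
    obtain ⟨u, rfl⟩ := Submodule.Quotient.mk_surjective _ a
    erw [LinearMap.mem_ker, coinvMap, Submodule.mapQ_apply] at ha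
    have : (ι u : W) ∈ actSub k Q W := (Submodule.Quotient.mk_eq_zero _).1 ha
    exact (Submodule.Quotient.mk_eq_zero _).2 (key u this)
  · ext a
    obtain ⟨v, rfl⟩ := Submodule.Quotient.mk_surjective _ a
    constructor
    · rintro ⟨b, hb⟩
      obtain ⟨u, rfl⟩ := Submodule.Quotient.mk_surjective _ b
      rw [← hb]
      erw [LinearMap.mem_ker, coinvMap, Submodule.mapQ_apply, coinvLift, Submodule.liftQ_apply]
      have : (ι u : W) ∈ LinearMap.ker p := hexact ▸ LinearMap.mem_range_self _ u
      exact this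
    · intro hv
      erw [LinearMap.mem_ker, coinvLift, Submodule.liftQ_apply] at hv
      obtain ⟨u, hu⟩ : v ∈ LinearMap.range ι.toLinearMap := by rw [hexact]; exact hv
      exact ⟨Submodule.Quotient.mk u, by erw [coinvMap, Submodule.mapQ_apply, hu]⟩
  · intro c
    obtain ⟨v, hv⟩ := hpsurj c
    exact ⟨Submodule.Quotient.mk v, by erw [coinvLift, Submodule.liftQ_apply]; exact hv⟩
end
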